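/- If X_P ≤ R(X_P) with R_{X_P} invertible, and X⋆ is Hermitian with R_{X⋆} invertible, then C_{T_{X⋆}}(X⋆ − X_P) ≥ K(X⋆, X_P) − (X_P − R(X_P)) + (X⋆ − R(X⋆)), where C_{T}(Z) = Z − T^H Z̄ T, T_{X⋆} = A − B F_{X⋆}, and K(X⋆, X_P) = (F_{X⋆} − F_{X_P})^H R_{X_P} (F_{X⋆} − F_{X_P}); in particular if additionally R_{X_P} > 0 and X⋆ ≥ R(X⋆) + K for some K ≥ 0 then C_{T_{X⋆}}(X⋆ − X_P) ≥ K. -/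
import Mathlib

open Matrix
open scoped ComplexOrder

noncomputable section

/-- Entrywise complex conjugation of a matrix. -/
def mconj {k l : ℕ} (M : Matrix (Fin k) (Fin l) ℂ) : Matrix (Fin k) (Fin l) ℂ :=
  M.map (starRingEnd ℂ)

variable {n m : ℕ}

/-- `R_X = R + Bᴴ X̄ B`. -/
def Rx (B : Matrix (Fin n) (Fin m) ℂ) (R : Matrix (Fin m) (Fin m) ℂ)
    (X : Matrix (Fin n) (Fin n) ℂ) : Matrix (Fin m) (Fin m) ℂ :=
  R + Bᴴ * mconj X * B

/-- The CDARE operator `R(X) = Aᴴ X̄ A − Aᴴ X̄ B R_X⁻¹ Bᴴ X̄ A + H`. -/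
def Ric (A : Matrix (Fin n) (Fin n) ℂ) (B : Matrix (Fin n) (Fin m) ℂ)
    (R : Matrix (Fin m) (Fin m) ℂ) (H X : Matrix (Fin n) (Fin n) ℂ) :
    Matrix (Fin n) (Fin n) ℂ :=
  Aᴴ * mconj X * A - Aᴴ * mconj X * B * (Rx B R X)⁻¹ * (Bᴴ * mconj X * A) + H

/-- `F_X = R_X⁻¹ Bᴴ X̄ A`. -/
def Fx (A : Matrix (Fin n) (Fin n) ℂ) (B : Matrix (Fin n) (Fin m) ℂ)
    (R : Matrix (Fin m) (Fin m) ℂ) (X : Matrix (Fin n) (Fin n) ℂ) :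
    Matrix (Fin m) (Fin n) ℂ :=
  (Rx B R X)⁻¹ * (Bᴴ * mconj X * A)

/-- `T_X = A − B F_X`. -/
def Tx (A : Matrix (Fin n) (Fin n) ℂ) (B : Matrix (Fin n) (Fin m) ℂ)
    (R : Matrix (Fin m) (Fin m) ℂ) (X : Matrix (Fin n) (Fin n) ℂ) :
    Matrix (Fin n) (Fin n) ℂ :=
  A - B * Fx A B R X

lemma mconj_herm {k : ℕ} {X : Matrix (Fin k) (Fin k) ℂ} (hX : X.IsHermitian) :
    (mconj X)ᴴ = mconj X := by
  ext i j
  have := congrFun (congrFun hX.eq i) j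
  simp [mconj, Matrix.conjTranspose_apply, Matrix.map_apply] at this ⊢
  simpa using congrArg star this

lemma mconj_sub {k : ℕ} (X Y : Matrix (Fin k) (Fin k) ℂ) :
    mconj (X - Y) = mconj X - mconj Y := by
  ext i j; simp [mconj]

lemma Rx_herm {B : Matrix (Fin n) (Fin m) ℂ} {R : Matrix (Fin m) (Fin m) ℂ}
    {X : Matrix (Fin n) (Fin n) ℂ} (hR : R.IsHermitian) (hX : X.IsHermitian) :
    (Rx B R X)ᴴ = Rx B R X := by
  simp only [Rx, Matrix.conjTranspose_add, Matrix.conjTranspose_mul,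
    Matrix.conjTranspose_conjTranspose, hR.eq, mconj_herm hX, Matrix.mul_assoc]

lemma ric_feedback (A : Matrix (Fin n) (Fin n) ℂ) (B : Matrix (Fin n) (Fin m) ℂ)
    (R : Matrix (Fin m) (Fin m) ℂ) (H X : Matrix (Fin n) (Fin n) ℂ)
    (hR : R.IsHermitian) (hX : X.IsHermitian) (hRx : IsUnit (Rx B R X))
    (F' : Matrix (Fin m) (Fin n) ℂ) :
    Ric A B R H X = (A - B * F')ᴴ * mconj X * (A - B * F') + F'ᴴ * R * F'
      - (F' - Fx A B R X)ᴴ * (Rx B R X) * (F' - Fx A B R X) + H := by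
  set Y := mconj X with hY
  set S := Rx B R X with hS
  have hYh : Yᴴ = Y := mconj_herm hX
  have hSh : Sᴴ = S := Rx_herm hR hX
  have hdet : IsUnit S.det := (Matrix.isUnit_iff_isUnit_det S).mp hRx
  have hSiS : S⁻¹ * S = 1 := Matrix.nonsing_inv_mul S hdet
  have hSSi : S * S⁻¹ = 1 := Matrix.mul_nonsing_inv S hdet
  have hSih : (S⁻¹)ᴴ = S⁻¹ := by rw [Matrix.conjTranspose_nonsing_inv, hSh]
  have hc1 : ∀ x : Matrix (Fin m) (Fin n) ℂ, S⁻¹ * (S * x) = x := by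
    intro x; rw [← Matrix.mul_assoc, hSiS, Matrix.one_mul]
  have hc2 : ∀ x : Matrix (Fin m) (Fin n) ℂ, S * (S⁻¹ * x) = x := by
    intro x; rw [← Matrix.mul_assoc, hSSi, Matrix.one_mul]
  have hc3 : ∀ x : Matrix (Fin m) (Fin n) ℂ, S * x = R * x + Bᴴ * (Y * (B * x)) := by
    intro x; rw [hS, Rx, Matrix.add_mul, Matrix.mul_assoc, Matrix.mul_assoc, ← hY]
  simp only [Ric, Fx, ← hS, ← hY]
  simp only [Matrix.conjTranspose_sub, Matrix.conjTranspose_mul,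
    Matrix.conjTranspose_conjTranspose, hYh, hSih]
  simp only [Matrix.mul_sub, Matrix.sub_mul, Matrix.mul_assoc]
  simp only [hc1, hc2]
  simp only [hc3]
  simp only [Matrix.mul_add, Matrix.add_mul, Matrix.mul_assoc]
  abel

theorem stmt19 (n m : ℕ) (A : Matrix (Fin n) (Fin n) ℂ) (B : Matrix (Fin n) (Fin m) ℂ)
    (R : Matrix (Fin m) (Fin m) ℂ) (H XP Xs : Matrix (Fin n) (Fin n) ℂ)
    (hR : R.IsHermitian) (hRu : IsUnit R) (hH : H.IsHermitian)
    (hXP : XP.IsHermitian) (hXs : Xs.IsHermitian)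
    (hRxP : IsUnit (Rx B R XP)) (hRxs : IsUnit (Rx B R Xs))
    (hle : (Ric A B R H XP - XP).PosSemidef) :
    (((Xs - XP) - (Tx A B R Xs)ᴴ * mconj (Xs - XP) * Tx A B R Xs) -
      ((Fx A B R Xs - Fx A B R XP)ᴴ * Rx B R XP * (Fx A B R Xs - Fx A B R XP) -
        (XP - Ric A B R H XP) + (Xs - Ric A B R H Xs))).PosSemidef ∧
    ((Rx B R XP).PosDef →
      ∀ K : Matrix (Fin n) (Fin n) ℂ, K.PosSemidef →
        (Xs - (Ric A B R H Xs + K)).PosSemidef →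
        (((Xs - XP) - (Tx A B R Xs)ᴴ * mconj (Xs - XP) * Tx A B R Xs) - K).PosSemidef) := by
  have e1 := ric_feedback A B R H Xs hR hXs hRxs (Fx A B R Xs)
  have e2 := ric_feedback A B R H XP hR hXP hRxP (Fx A B R Xs)
  have hzero : ((Xs - XP) - (Tx A B R Xs)ᴴ * mconj (Xs - XP) * Tx A B R Xs) -
      ((Fx A B R Xs - Fx A B R XP)ᴴ * Rx B R XP * (Fx A B R Xs - Fx A B R XP) -
        (XP - Ric A B R H XP) + (Xs - Ric A B R H Xs)) = 0 := by
    rw [Tx, mconj_sub]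
    rw [e1, e2]
    simp only [sub_self, Matrix.conjTranspose_zero, Matrix.zero_mul, Matrix.mul_zero,
      Matrix.mul_sub, Matrix.sub_mul]
    abel
  constructor
  · rw [hzero]; exact Matrix.PosSemidef.zero
  · intro hPD K hK hK2
    have hC : (Xs - XP) - (Tx A B R Xs)ᴴ * mconj (Xs - XP) * Tx A B R Xs =
        (Fx A B R Xs - Fx A B R XP)ᴴ * Rx B R XP * (Fx A B R Xs - Fx A B R XP) -
        (XP - Ric A B R H XP) + (Xs - Ric A B R H Xs) := by
      have := sub_eq_zero.mp hzero
      exact this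
    have heq : ((Xs - XP) - (Tx A B R Xs)ᴴ * mconj (Xs - XP) * Tx A B R Xs) - K =
        (Fx A B R Xs - Fx A B R XP)ᴴ * Rx B R XP * (Fx A B R Xs - Fx A B R XP) +
        (Ric A B R H XP - XP) + (Xs - (Ric A B R H Xs + K)) := by
      rw [hC]; abel
    rw [heq]
    exact ((hPD.posSemidef.conjTranspose_mul_mul_same _).add hle).add hK2
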